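/- arXiv:math/0012204 — 2 statements merged into one kernel-verified Lean document; each statement's English description precedes it below -/
import Mathlib

section
/- Let P be a simple d-polytope and let 2 ≤ k ≤ d−1. Then the set 𝒱_k(P) of vertex sets of k-faces of P is a k-system of G(P); that is, for every k-face F of P the subgraph of G(P) induced by the vertices of F is k-regular, and the vertex set of every k-frame of P is contained in the vertex set of a unique k-face of P. -/
open Set

noncomputable section

/-- `P` is a polytope: the convex hull of a finite set of points. -/
def IsPolytope {d : ℕ} (P : Set (EuclideanSpace ℝ (Fin d))) : Prop :=
  ∃ s : Finset (EuclideanSpace ℝ (Fin d)),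
    P = convexHull ℝ (s : Set (EuclideanSpace ℝ (Fin d)))

/-- The dimension of the affine span of a set. -/
def setDim {d : ℕ} (F : Set (EuclideanSpace ℝ (Fin d))) : ℕ :=
  Module.finrank ℝ (vectorSpan ℝ F)

/-- A face of `P` is an exposed subset of `P` (this includes `∅` and `P` itself). -/
def IsFace {d : ℕ} (P F : Set (EuclideanSpace ℝ (Fin d))) : Prop :=
  IsExposed ℝ P F

/-- A `k`-face is a face whose affine span has dimension `k`. -/
def IsKFace {d : ℕ} (P : Set (EuclideanSpace ℝ (Fin d))) (k : ℕ)
    (F : Set (EuclideanSpace ℝ (Fin d))) : Prop :=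
  IsFace P F ∧ setDim F = k

/-- The type of vertices of `P` (points whose singleton is a face, i.e. the `0`-faces). -/
abbrev Vtx {d : ℕ} (P : Set (EuclideanSpace ℝ (Fin d))) : Type :=
  {v : EuclideanSpace ℝ (Fin d) // IsFace P {v}}

/-- The graph of the polytope `P`: two vertices are adjacent iff the segment
between them is an edge (`1`-face) of `P`. -/
def polyGraph {d : ℕ} (P : Set (EuclideanSpace ℝ (Fin d))) : SimpleGraph (Vtx P) where
  Adj u v := u ≠ v ∧
    IsFace P (segment ℝ (u : EuclideanSpace ℝ (Fin d)) (v : EuclideanSpace ℝ (Fin d)))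
  symm := by
    constructor
    rintro u v ⟨h1, h2⟩
    exact ⟨h1.symm, by rwa [segment_symm]⟩
  loopless := by constructor; rintro v ⟨h1, _⟩; exact h1 rfl

/-- `P` is a simple `d`-polytope (in `ℝ^d`): a polytope whose affine span has
dimension `d` and each of whose vertices is incident to exactly `d` edges. -/
def IsSimplePolytope {d : ℕ} (P : Set (EuclideanSpace ℝ (Fin d))) : Prop :=
  IsPolytope P ∧ setDim P = d ∧ ∀ v : Vtx P, ((polyGraph P).neighborSet v).ncard = d

/-- `O` is an orientation of the simple graph `G`: each edge gets exactly one direction,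
and only edges are directed. -/
def IsOrientation {V : Type*} (G : SimpleGraph V) (O : V → V → Prop) : Prop :=
  (∀ u v, O u v → G.Adj u v) ∧ (∀ u v, G.Adj u v → (O u v ↔ ¬ O v u))

/-- `O` is acyclic: there is no directed cycle. -/
def AcyclicOrientation {V : Type*} (O : V → V → Prop) : Prop :=
  ∀ v, ¬ Relation.TransGen O v v

/-- `v` is a sink of the subgraph induced on `W`, under the orientation `O`. -/
def IsSinkOn {V : Type*} (O : V → V → Prop) (W : Set V) (v : V) : Prop :=
  v ∈ W ∧ ∀ u ∈ W, ¬ O v u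

/-- The in-degree of `v` under `O`. -/
def inDeg {V : Type*} (O : V → V → Prop) (v : V) : ℕ := {u | O u v}.ncard

/-- `hNum O i` is the number of vertices of in-degree exactly `i` under `O`. -/
def hNum {V : Type*} (O : V → V → Prop) (i : ℕ) : ℕ := {v | inDeg O v = i}.ncard

/-- `Hk O k = Σ_v C(indeg_O(v), k)`. -/
def Hk {V : Type*} [Fintype V] (O : V → V → Prop) (k : ℕ) : ℕ :=
  ∑ v : V, (inDeg O v).choose k

/-- The subgraph of `G` induced on `S` is `k`-regular. -/
def InducedKRegular {V : Type*} (G : SimpleGraph V) (k : ℕ) (S : Set V) : Prop :=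
  ∀ v ∈ S, (S ∩ G.neighborSet v).ncard = k

/-- `𝒮` is a `k`-system of `G`: every member induces a `k`-regular subgraph, and the
node set of every `k`-frame (a root together with `k` of its neighbors) is contained
in a unique member of `𝒮`. -/
def IsKSystem {V : Type*} (G : SimpleGraph V) (k : ℕ) (𝒮 : Set (Set V)) : Prop :=
  (∀ S ∈ 𝒮, InducedKRegular G k S) ∧
  (∀ (r : V) (N : Finset V), N.card = k → (∀ w ∈ N, G.Adj r w) →
    ∃! S, S ∈ 𝒮 ∧ insert r (N : Set V) ⊆ S)

/-- The set of vertices of `P` lying in `F`. -/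
def faceVerts {d : ℕ} (P F : Set (EuclideanSpace ℝ (Fin d))) : Set (Vtx P) :=
  {v : Vtx P | (v : EuclideanSpace ℝ (Fin d)) ∈ F}

/-- The set of vertex sets of `k`-faces of `P`. -/
def kFaceSets {d : ℕ} (P : Set (EuclideanSpace ℝ (Fin d))) (k : ℕ) : Set (Set (Vtx P)) :=
  {W | ∃ F, IsKFace P k F ∧ W = faceVerts P F}

/-- `f_k(P)`, the number of `k`-faces of `P`. -/
def numKFaces {d : ℕ} (P : Set (EuclideanSpace ℝ (Fin d))) (k : ℕ) : ℕ :=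
  {F : Set (EuclideanSpace ℝ (Fin d)) | IsKFace P k F}.ncard

/-- `O` is an AOF-orientation of the graph of `P`: an acyclic orientation inducing a
unique sink on the subgraph induced by the vertex set of every nonempty face of `P`. -/
def IsAOF {d : ℕ} (P : Set (EuclideanSpace ℝ (Fin d))) (O : Vtx P → Vtx P → Prop) : Prop :=
  IsOrientation (polyGraph P) O ∧ AcyclicOrientation O ∧
  ∀ F : Set (EuclideanSpace ℝ (Fin d)), IsFace P F → F.Nonempty →
    ∃! v : Vtx P, IsSinkOn O (faceVerts P F) v

/-!
At a vertex `v` of a polytope `P = conv s`, every `x ∈ P` has `x - v` in the cone spanned by the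
edge directions `u - v`: centrally projecting `s \ {v}` onto a hyperplane that cuts off `v` gives a
polytope (the vertex figure) whose extreme points all come from edges at `v`, and `P - v` lies in
the cone over the vertex figure.

If `P` is simple and full-dimensional, the `d` edge directions at `v` therefore form a basis in
which every point of `P - v` has nonnegative coordinates. The faces through `v` are then exactly the
sets `{x ∈ P | the coordinates outside T vanish}` for sets `T` of edges at `v`; such a face has
dimension `|T|` and contains exactly the edges in `T`, which gives both properties of a `k`-system.
-/

open Module

section Polytope

variable {E : Type*} [NormedAddCommGroup E] [NormedSpace ℝ E] {s : Set E} {v : E}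

theorem toExposed_convexHull (hs : s.Finite) (l : StrongDual ℝ E) :
    l.toExposed (convexHull ℝ s) = convexHull ℝ (l.toExposed s) := by
  rcases s.eq_empty_or_nonempty with rfl | hne
  · simp [ContinuousLinearMap.toExposed]
  obtain ⟨x₀, hx₀, hmax⟩ := s.exists_max_image l hs hne
  have hle : convexHull ℝ s ⊆ {x | l x ≤ l x₀} :=
    convexHull_min hmax (convex_halfSpace_le l.isLinear _)
  set t := l.toExposed s
  have hts : t ⊆ s := fun x hx => hx.1
  have hge : convexHull ℝ t ⊆ {x | l x₀ ≤ l x} :=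
    convexHull_min (fun x hx => hx.2 x₀ hx₀) (convex_halfSpace_ge l.isLinear _)
  apply Subset.antisymm
  · rintro x ⟨hx, hxmax⟩
    have hlx : l x = l x₀ := le_antisymm (hle hx) (hxmax x₀ (subset_convexHull ℝ s hx₀))
    rcases (s \ t).eq_empty_or_nonempty with hu | hu
    · rwa [← union_sdiff_cancel hts, hu, union_empty] at hx
    obtain ⟨y₀, hy₀, hymax⟩ := (s \ t).exists_max_image l hs.sdiff hu
    have hlt : l y₀ < l x₀ := by
      by_contra! h
      exact hy₀.2 ⟨hy₀.1, fun z hz => (hmax z hz).trans h⟩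
    rw [← union_sdiff_cancel hts, convexHull_union (⟨x₀, hx₀, hmax⟩ : t.Nonempty) hu] at hx
    obtain ⟨a, ha, b, hb, hxab⟩ := mem_convexJoin.1 hx
    obtain ⟨θa, θb, hθa, hθb, hθ, rfl⟩ := hxab
    have hlb : l b ≤ l y₀ := convexHull_min hymax (convex_halfSpace_le l.isLinear _) hb
    have hla : l a ≤ l x₀ := hle (convexHull_mono hts ha)
    have hθb0 : θb = 0 := by
      by_contra h
      have hθb' : 0 < θb := hθb.lt_of_ne' h
      have : θa * l a + θb * l b < l x₀ := calc
        θa * l a + θb * l b ≤ θa * l x₀ + θb * l y₀ := by gcongr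
        _ < θa * l x₀ + θb * l x₀ := by gcongr
        _ = l x₀ := by rw [← add_mul, hθ, one_mul]
      simp only [map_add, map_smul, smul_eq_mul] at hlx
      exact this.ne hlx
    rw [hθb0, zero_smul, add_zero, show θa = 1 by linarith, one_smul]
    exact ha
  · exact fun x hx => ⟨convexHull_mono hts hx, fun y hy => (hle hy).trans (hge hx)⟩

theorem convexHull_extremePoints_convexHull (hs : s.Finite) :
    convexHull ℝ ((convexHull ℝ s).extremePoints ℝ) = convexHull ℝ s := by
  have hclosed : IsClosed (convexHull ℝ ((convexHull ℝ s).extremePoints ℝ)) :=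
    ((hs.subset extremePoints_convexHull_subset).isCompact_convexHull ℝ).isClosed
  rw [← hclosed.closure_eq]
  exact closure_convexHull_extremePoints (hs.isCompact_convexHull ℝ) (convex_convexHull ℝ s)

theorem isExposed_singleton_of_mem_extremePoints (hs : s.Finite)
    (hv : v ∈ (convexHull ℝ s).extremePoints ℝ) : IsExposed ℝ (convexHull ℝ s) {v} := by
  have hvs : v ∈ s := extremePoints_convexHull_subset hv
  have hv' : v ∉ convexHull ℝ (s \ {v}) := fun h =>
    ((convex_convexHull ℝ s).mem_extremePoints_iff_mem_sdiff_convexHull_sdiff.1 hv).2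
      (convexHull_mono (sdiff_subset_sdiff_left (subset_convexHull ℝ s)) h)
  obtain ⟨f, u, hfu, hfv⟩ := geometric_hahn_banach_closed_point (convex_convexHull ℝ _)
    (hs.sdiff.isCompact_convexHull ℝ).isClosed hv'
  have hf : f.toExposed s = {v} := by
    refine Subset.antisymm (fun x ⟨hx, hxmax⟩ => ?_) (singleton_subset_iff.2 ⟨hvs, fun y hy => ?_⟩)
    · by_contra hxv
      exact (hxmax v hvs).not_gt ((hfu x (subset_convexHull ℝ _ ⟨hx, hxv⟩)).trans hfv)
    · rcases eq_or_ne y v with rfl | hyv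
      · rfl
      · exact ((hfu y (subset_convexHull ℝ _ ⟨hy, hyv⟩)).trans hfv).le
  exact fun _ => ⟨f, ((toExposed_convexHull hs f).trans (by rw [hf, convexHull_singleton])).symm⟩

theorem IsExposed.mem_of_singleton_convexHull (hv : IsExposed ℝ (convexHull ℝ s) {v}) : v ∈ s :=
  extremePoints_convexHull_subset (isExtreme_singleton.1 hv.isExtreme)

theorem right_mem_extremePoints_segment (x y : E) : y ∈ (segment ℝ x y).extremePoints ℝ := by
  rw [← convexHull_pair (𝕜 := ℝ)]
  by_contra hy
  have hsub : (convexHull ℝ {x, y}).extremePoints ℝ ⊆ {x} := fun z hz => by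
    rcases extremePoints_convexHull_subset hz with rfl | rfl
    · rfl
    · exact absurd hz hy
  have hyx : y ∈ convexHull ℝ {x} := convexHull_mono hsub <| by
    rw [convexHull_extremePoints_convexHull (toFinite _)]
    exact subset_convexHull ℝ _ (mem_insert_of_mem x rfl)
  rw [convexHull_singleton, mem_singleton_iff] at hyx
  subst hyx
  simp at hy

theorem convexHull_eq_segment_of_subset {t : Set E} {x y : E} (ht : t ⊆ segment ℝ x y)
    (hx : x ∈ t) (hy : y ∈ t) : convexHull ℝ t = segment ℝ x y :=
  (convexHull_min ht (convex_segment x y)).antisymm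
    ((convex_convexHull ℝ t).segment_subset (subset_convexHull ℝ t hx) (subset_convexHull ℝ t hy))

theorem lt_of_singleton_eq_toExposed {P : Set E} {l : StrongDual ℝ E} (hl : {v} = l.toExposed P)
    {y : E} (hy : y ∈ P) (hyv : y ≠ v) : l y < l v := by
  have hv : v ∈ l.toExposed P := hl ▸ rfl
  refine (hv.2 y hy).lt_of_ne fun h => hyv ?_
  rw [← mem_singleton_iff, hl]
  exact ⟨hy, fun z hz => h ▸ hv.2 z hz⟩

def edgeNeighbors (P : Set E) (v : E) : Set E :=
  {u | u ≠ v ∧ IsExposed ℝ P {u} ∧ IsExposed ℝ P (segment ℝ v u)}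

theorem finite_edgeNeighbors (hs : s.Finite) : (edgeNeighbors (convexHull ℝ s) v).Finite :=
  hs.subset fun _ hu => hu.2.1.mem_of_singleton_convexHull

theorem exists_mem_edgeNeighbors_of_toExposed_subset_ray (hs : s.Finite) {n : StrongDual ℝ E}
    {w : E} {τ : E → ℝ} (hvn : v ∈ n.toExposed s) (hne : (n.toExposed s \ {v}).Nonempty)
    (hray : ∀ y ∈ n.toExposed s \ {v}, 0 < τ y ∧ y - v = τ y • w) :
    ∃ u ∈ edgeNeighbors (convexHull ℝ s) v, ∃ t : ℝ, 0 < t ∧ u - v = t • w := by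
  obtain ⟨u, hu, humax⟩ := (n.toExposed s \ {v}).exists_max_image τ
    (hs.subset fun y hy => hy.1.1) hne
  obtain ⟨hτu, hu_sub⟩ := hray u hu
  have hray_seg : ∀ y ∈ n.toExposed s \ {v}, y ∈ segment ℝ v u := fun y hy => by
    obtain ⟨hτy, hy_sub⟩ := hray y hy
    rw [segment_eq_image']
    refine ⟨τ y / τ u, ⟨by positivity, div_le_one_of_le₀ (humax y hy) hτu.le⟩, ?_⟩
    change v + (τ y / τ u) • (u - v) = y
    rw [hu_sub, smul_smul, div_mul_cancel₀ _ hτu.ne', ← hy_sub, add_sub_cancel]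
  have hedge : n.toExposed (convexHull ℝ s) = segment ℝ v u := by
    rw [toExposed_convexHull hs, ← insert_eq_of_mem hvn, ← insert_sdiff_singleton]
    refine convexHull_eq_segment_of_subset (insert_subset (left_mem_segment ℝ v u) hray_seg)
      (mem_insert v _) (mem_insert_of_mem v hu)
  have hseg : IsExposed ℝ (convexHull ℝ s) (segment ℝ v u) := fun _ => ⟨n, hedge.symm⟩
  have hu_ext : u ∈ (convexHull ℝ s).extremePoints ℝ := isExtreme_singleton.1 <|
    hseg.isExtreme.trans (isExtreme_singleton.2 (right_mem_extremePoints_segment v u))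
  exact ⟨u, ⟨hu.2, isExposed_singleton_of_mem_extremePoints hs hu_ext, hseg⟩, τ u, hτu, hu_sub⟩

/-- Central projection from `v` onto the hyperplane `l = l v - 1`. -/
def vertexFigureProj (l : StrongDual ℝ E) (v y : E) : E :=
  v + (l v - l y)⁻¹ • (y - v)

theorem sub_eq_smul_vertexFigureProj_sub {l : StrongDual ℝ E} {y : E} (h : l y ≠ l v) :
    y - v = (l v - l y) • (vertexFigureProj l v y - v) := by
  rw [vertexFigureProj, add_sub_cancel_left, smul_smul, mul_inv_cancel₀ (sub_ne_zero.2 h.symm),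
    one_smul]

theorem exists_mem_edgeNeighbors_of_mem_extremePoints_vertexFigure (hs : s.Finite)
    {l : StrongDual ℝ E} (hl : {v} = l.toExposed (convexHull ℝ s)) {q : E}
    (hq : q ∈ (convexHull ℝ (vertexFigureProj l v '' (s \ {v}))).extremePoints ℝ) :
    ∃ u ∈ edgeNeighbors (convexHull ℝ s) v, ∃ t : ℝ, 0 < t ∧ u - v = t • (q - v) := by
  set p := vertexFigureProj l v
  have hlt : ∀ y ∈ s \ {v}, l y < l v := fun y hy =>
    lt_of_singleton_eq_toExposed hl (subset_convexHull ℝ s hy.1) hy.2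
  obtain ⟨m, hm⟩ := isExposed_singleton_of_mem_extremePoints (hs.sdiff.image p) hq ⟨q, rfl⟩
  have hqm : q ∈ m.toExposed (convexHull ℝ (p '' (s \ {v}))) := by
    rw [ContinuousLinearMap.toExposed, ← hm]
    rfl
  have hmq : ∀ y ∈ s \ {v}, m (p y) ≤ m q := fun y hy =>
    hqm.2 _ (subset_convexHull ℝ _ ⟨y, hy, rfl⟩)
  have hq_unique : ∀ y ∈ s \ {v}, m q ≤ m (p y) → p y = q := fun y hy h => by
    rw [← mem_singleton_iff, hm]
    exact ⟨subset_convexHull ℝ _ ⟨y, hy, rfl⟩, fun z hz => (hqm.2 z hz).trans h⟩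
  -- The coefficient of `l` makes `n y - n v` a positive multiple of `m (p y) - m q`, so `n` is
  -- maximised over `s` exactly at `v` and at the points that project onto `q`.
  set n := m + (m q - m v) • l
  have hn : ∀ y ∈ s \ {v}, n y - n v = (l v - l y) * (m (p y) - m q) := fun y hy => by
    have := congrArg m (sub_eq_smul_vertexFigureProj_sub (hlt y hy).ne)
    simp only [map_sub, map_smul, smul_eq_mul] at this
    change m y + (m q - m v) * l y - (m v + (m q - m v) * l v) = _
    linear_combination this
  have hvs : v ∈ s := IsExposed.mem_of_singleton_convexHull fun _ => ⟨l, hl⟩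
  have hn_le : ∀ y ∈ s, n y ≤ n v := fun y hy => by
    rcases eq_or_ne y v with rfl | hyv
    · rfl
    · nlinarith [hn y ⟨hy, hyv⟩, hlt y ⟨hy, hyv⟩, hmq y ⟨hy, hyv⟩]
  obtain ⟨y₀, hy₀, hpy₀⟩ := extremePoints_convexHull_subset hq
  have hy₀n : y₀ ∈ n.toExposed s \ {v} := by
    refine ⟨⟨hy₀.1, fun z hz => ?_⟩, hy₀.2⟩
    have := hn y₀ hy₀
    rw [hpy₀, sub_self, mul_zero, sub_eq_zero] at this
    exact this ▸ hn_le z hz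
  refine exists_mem_edgeNeighbors_of_toExposed_subset_ray hs ⟨hvs, hn_le⟩ ⟨y₀, hy₀n⟩
    fun y ⟨⟨hy, hymax⟩, hyv⟩ => ⟨sub_pos.2 (hlt y ⟨hy, hyv⟩), ?_⟩
  have hpy : p y = q := hq_unique y ⟨hy, hyv⟩ <| by
    nlinarith [hn y ⟨hy, hyv⟩, hymax v hvs, hlt y ⟨hy, hyv⟩]
  rw [← hpy]
  exact sub_eq_smul_vertexFigureProj_sub (hlt y ⟨hy, hyv⟩).ne

theorem sub_mem_hull_edgeNeighbors (hs : s.Finite) (hv : IsExposed ℝ (convexHull ℝ s) {v})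
    {x : E} (hx : x ∈ convexHull ℝ s) :
    x - v ∈ PointedCone.hull ℝ ((· - v) '' edgeNeighbors (convexHull ℝ s) v) := by
  set C := PointedCone.hull ℝ ((· - v) '' edgeNeighbors (convexHull ℝ s) v)
  have hC : Convex ℝ {z | z - v ∈ C} := by
    have := C.convex.translate_preimage_right (-v)
    simp only [preimage, neg_add_eq_sub, SetLike.mem_coe] at this
    exact this
  obtain ⟨l, hl⟩ := hv ⟨v, rfl⟩
  set p := vertexFigureProj l v
  have hfigure : convexHull ℝ (p '' (s \ {v})) ⊆ {z | z - v ∈ C} := by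
    rw [← convexHull_extremePoints_convexHull (hs.sdiff.image p)]
    refine convexHull_min (fun q hq => ?_) hC
    obtain ⟨u, hu, t, ht, hut⟩ :=
      exists_mem_edgeNeighbors_of_mem_extremePoints_vertexFigure hs hl hq
    have : q - v = t⁻¹ • (u - v) := by rw [hut, smul_smul, inv_mul_cancel₀ ht.ne', one_smul]
    rw [mem_ofPred_eq, this]
    exact C.smul_mem (inv_nonneg.2 ht.le) (PointedCone.subset_hull ⟨u, hu, rfl⟩)
  refine convexHull_min (fun y hy => ?_) hC hx
  rcases eq_or_ne y v with rfl | hyv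
  · simp
  · have hly := lt_of_singleton_eq_toExposed hl (subset_convexHull ℝ s hy) hyv
    rw [mem_ofPred_eq, sub_eq_smul_vertexFigureProj_sub hly.ne]
    exact C.smul_mem (sub_nonneg.2 hly.le) (hfigure (subset_convexHull ℝ _ ⟨y, ⟨hy, hyv⟩, rfl⟩))

theorem Module.Basis.coord_nonneg_of_mem_hull {ι : Type*} (b : Basis ι ℝ E) {x : E}
    (hx : x ∈ PointedCone.hull ℝ (range b)) (i : ι) : 0 ≤ b.coord i x := by
  induction hx using Submodule.span_induction with
  | mem _ hy =>
    obtain ⟨j, rfl⟩ := hy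
    classical
    rw [b.coord_apply, b.repr_self, Finsupp.single_apply]
    split_ifs <;> norm_num
  | zero => simp
  | add _ _ _ _ hy hz => rw [map_add]; exact add_nonneg hy hz
  | smul a _ _ hy => rw [← Nonneg.coe_smul, map_smul, smul_eq_mul]; exact mul_nonneg a.2 hy

section Corner

variable {ι : Type*} {P : Set E} {b : Basis ι ℝ E}

def cornerFace (P : Set E) (v : E) (b : Basis ι ℝ E) (T : Set ι) : Set E :=
  {x ∈ P | ∀ i ∉ T, b.coord i (x - v) = 0}

theorem self_mem_cornerFace (hv : v ∈ P) {T : Set ι} : v ∈ cornerFace P v b T :=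
  ⟨hv, fun i _ => by simp⟩

theorem isExposed_cornerFace [Finite ι] (hv : v ∈ P) (hcone : ∀ x ∈ P, ∀ i, 0 ≤ b.coord i (x - v))
    (T : Set ι) : IsExposed ℝ P (cornerFace P v b T) := by
  classical
  have := Fintype.ofFinite ι
  have := Module.Finite.of_basis b
  set O := Finset.univ.filter (· ∉ T)
  let L : E →ₗ[ℝ] ℝ := -∑ i ∈ O, b.coord i
  have hL : ∀ x, L x = L v - ∑ i ∈ O, b.coord i (x - v) := fun x => by
    simp only [L, LinearMap.neg_apply, LinearMap.sum_apply, map_sub,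
      Finset.sum_sub_distrib]
    ring
  have hsum : ∀ x ∈ P, (∀ i ∉ T, b.coord i (x - v) = 0) ↔ ∑ i ∈ O, b.coord i (x - v) = 0 :=
    fun x hx => by rw [Finset.sum_eq_zero_iff_of_nonneg fun i _ => hcone x hx i]; simp [O]
  refine fun _ => ⟨LinearMap.toContinuousLinearMap L, Set.ext fun x => and_congr_right fun hx => ?_⟩
  simp only [LinearMap.coe_toContinuousLinearMap']
  rw [hsum x hx]
  have hnn : ∀ y ∈ P, 0 ≤ ∑ i ∈ O, b.coord i (y - v) :=
    fun y hy => Finset.sum_nonneg fun i _ => hcone y hy i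
  constructor
  · intro h y hy
    rw [hL x, hL y, h]
    linarith [hnn y hy]
  · intro h
    have := h v hv
    rw [hL x] at this
    linarith [hnn x hx]

theorem add_mem_cornerFace_iff (hb : ∀ i, v + b i ∈ P) {T : Set ι} {j : ι} :
    v + b j ∈ cornerFace P v b T ↔ j ∈ T := by
  classical
  have hcoord : ∀ i, b.coord i (v + b j - v) = if j = i then 1 else 0 := fun i => by
    rw [add_sub_cancel_left, b.coord_apply, b.repr_self, Finsupp.single_apply]
  refine ⟨fun h => ?_, fun hj => ⟨hb j, fun i hi => ?_⟩⟩
  · by_contra hj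
    simpa [hcoord] using h.2 j hj
  · rw [hcoord, if_neg (ne_of_mem_of_not_mem hj hi)]

theorem finrank_vectorSpan_cornerFace [Finite ι] (hv : v ∈ P) (hb : ∀ i, v + b i ∈ P) (T : Set ι) :
    finrank ℝ (vectorSpan ℝ (cornerFace P v b T)) = T.ncard := by
  classical
  have := Fintype.ofFinite ι
  have hvF : v ∈ cornerFace P v b T := self_mem_cornerFace hv
  have hspan : vectorSpan ℝ (cornerFace P v b T) = Submodule.span ℝ (b '' T) := by
    rw [vectorSpan_eq_span_vsub_set_right ℝ hvF]
    apply le_antisymm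
    · rw [Submodule.span_le]
      rintro _ ⟨x, ⟨-, hx⟩, rfl⟩
      change x - v ∈ _
      rw [← b.sum_repr (x - v)]
      refine Submodule.sum_mem _ fun i _ => ?_
      by_cases hi : i ∈ T
      · exact Submodule.smul_mem _ _ (Submodule.subset_span (mem_image_of_mem b hi))
      · rw [← b.coord_apply, hx i hi, zero_smul]
        exact Submodule.zero_mem _
    · rw [Submodule.span_le]
      rintro _ ⟨i, hi, rfl⟩
      refine Submodule.subset_span ⟨v + b i, (add_mem_cornerFace_iff hb).2 hi, ?_⟩
      simp
  rw [hspan, image_eq_range, ← Nat.card_coe_set_eq, Nat.card_eq_fintype_card]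
  exact finrank_span_eq_card (b.linearIndependent.comp _ Subtype.val_injective)

theorem IsExposed.eq_cornerFace [Finite ι] {F : Set E} (hF : IsExposed ℝ P F) (hvF : v ∈ F)
    (hcone : ∀ x ∈ P, ∀ i, 0 ≤ b.coord i (x - v)) (hb : ∀ i, v + b i ∈ P) :
    F = cornerFace P v b {i | v + b i ∈ F} := by
  have := Fintype.ofFinite ι
  obtain ⟨l, rfl⟩ := hF ⟨v, hvF⟩
  have hmem : ∀ x ∈ P, x ∈ l.toExposed P ↔ l x = l v := fun x hx =>
    ⟨fun h => le_antisymm (hvF.2 x hx) (h.2 v hvF.1), fun h => ⟨hx, fun y hy => h ▸ hvF.2 y hy⟩⟩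
  have hexp : ∀ x, l x - l v = ∑ i, b.coord i (x - v) * l (b i) := fun x => by
    rw [← map_sub]
    conv_lhs => rw [← b.sum_repr (x - v)]
    simp [b.coord_apply]
  have hterm : ∀ x ∈ P, ∀ i, b.coord i (x - v) * l (b i) ≤ 0 := fun x hx i => by
    have := hvF.2 _ (hb i)
    rw [map_add] at this
    exact mul_nonpos_of_nonneg_of_nonpos (hcone x hx i) (by linarith)
  have hdir : ∀ i, v + b i ∈ l.toExposed P ↔ l (b i) = 0 := fun i => by
    rw [hmem _ (hb i), map_add, add_eq_left]
  ext x
  refine ⟨fun hx => ⟨hx.1, fun i hi => ?_⟩, fun ⟨hx, hxT⟩ => (hmem x hx).2 ?_⟩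
  · have hzero := (Finset.sum_eq_zero_iff_of_nonpos fun i _ => hterm x hx.1 i).1
      (by rw [← hexp, (hmem x hx.1).1 hx, sub_self])
    exact (mul_eq_zero.1 (hzero i (Finset.mem_univ i))).resolve_right fun h => hi ((hdir i).2 h)
  · rw [← sub_eq_zero, hexp]
    refine Finset.sum_eq_zero fun i _ => ?_
    by_cases hi : v + b i ∈ l.toExposed P
    · rw [(hdir i).1 hi, mul_zero]
    · rw [hxT i hi, zero_mul]

end Corner

section SimpleVertex

variable [FiniteDimensional ℝ E]

theorem exists_basis_edgeNeighbors (hs : s.Finite) (hv : IsExposed ℝ (convexHull ℝ s) {v})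
    (hdim : finrank ℝ (vectorSpan ℝ (convexHull ℝ s)) = finrank ℝ E)
    (hdeg : (edgeNeighbors (convexHull ℝ s) v).ncard = finrank ℝ E) :
    ∃ b : Basis (edgeNeighbors (convexHull ℝ s) v) ℝ E,
      (∀ u, v + b u = u) ∧ ∀ x ∈ convexHull ℝ s, ∀ u, 0 ≤ b.coord u (x - v) := by
  set N := edgeNeighbors (convexHull ℝ s) v
  have := (finite_edgeNeighbors hs (v := v)).fintype
  let e : N → E := fun u => u - v
  have hrange : range e = (· - v) '' N := (image_eq_range (· - v) N).symm
  have hspan : ⊤ ≤ Submodule.span ℝ (range e) := by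
    rw [← Submodule.eq_top_of_finrank_eq hdim, vectorSpan_eq_span_vsub_set_right ℝ (hv.subset rfl),
      Submodule.span_le, hrange]
    rintro _ ⟨x, hx, rfl⟩
    exact PointedCone.hull_le_span ℝ _ (sub_mem_hull_edgeNeighbors hs hv hx)
  have hcard : Fintype.card N = finrank ℝ E := by
    rw [← Nat.card_eq_fintype_card, Nat.card_coe_set_eq, hdeg]
  set b := basisOfTopLeSpanOfCardEqFinrank e hspan hcard
  have hb : ⇑b = e := coe_basisOfTopLeSpanOfCardEqFinrank e hspan hcard
  refine ⟨b, fun u => by simp [hb, e], fun x hx u => b.coord_nonneg_of_mem_hull ?_ u⟩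
  rw [hb, hrange]
  exact sub_mem_hull_edgeNeighbors hs hv hx

theorem exists_isExposed_inter_edgeNeighbors_eq (hs : s.Finite)
    (hv : IsExposed ℝ (convexHull ℝ s) {v})
    (hdim : finrank ℝ (vectorSpan ℝ (convexHull ℝ s)) = finrank ℝ E)
    (hdeg : (edgeNeighbors (convexHull ℝ s) v).ncard = finrank ℝ E) {T : Set E}
    (hT : T ⊆ edgeNeighbors (convexHull ℝ s) v) :
    ∃ F, IsExposed ℝ (convexHull ℝ s) F ∧ v ∈ F ∧
      F ∩ edgeNeighbors (convexHull ℝ s) v = T ∧ finrank ℝ (vectorSpan ℝ F) = T.ncard := by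
  obtain ⟨b, hbv, hcone⟩ := exists_basis_edgeNeighbors hs hv hdim hdeg
  have := (finite_edgeNeighbors hs (v := v)).to_subtype
  have hvP : v ∈ convexHull ℝ s := hv.subset rfl
  have hb : ∀ u, v + b u ∈ convexHull ℝ s := fun u => (hbv u).symm ▸ u.2.2.1.subset rfl
  have hmem (u : edgeNeighbors (convexHull ℝ s) v) :
      (u : E) ∈ cornerFace (convexHull ℝ s) v b (Subtype.val ⁻¹' T) ↔ (u : E) ∈ T := by
    simpa only [hbv, mem_preimage] using add_mem_cornerFace_iff hb (j := u) (T := Subtype.val ⁻¹' T)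
  refine ⟨cornerFace (convexHull ℝ s) v b (Subtype.val ⁻¹' T), isExposed_cornerFace hvP hcone _,
    self_mem_cornerFace hvP, Set.ext fun x => ⟨fun ⟨hxF, hxN⟩ => (hmem ⟨x, hxN⟩).1 hxF,
      fun hxT => ⟨(hmem ⟨x, hT hxT⟩).2 hxT, hT hxT⟩⟩, ?_⟩
  rw [finrank_vectorSpan_cornerFace hvP hb,
      ncard_preimage_of_injective_subset_range Subtype.val_injective (by simpa using hT)]

theorem IsExposed.finrank_vectorSpan_eq_ncard_inter_edgeNeighbors {F : Set E}
    (hF : IsExposed ℝ (convexHull ℝ s) F) (hvF : v ∈ F) (hs : s.Finite)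
    (hv : IsExposed ℝ (convexHull ℝ s) {v})
    (hdim : finrank ℝ (vectorSpan ℝ (convexHull ℝ s)) = finrank ℝ E)
    (hdeg : (edgeNeighbors (convexHull ℝ s) v).ncard = finrank ℝ E) :
    finrank ℝ (vectorSpan ℝ F) = (F ∩ edgeNeighbors (convexHull ℝ s) v).ncard := by
  obtain ⟨b, hbv, hcone⟩ := exists_basis_edgeNeighbors hs hv hdim hdeg
  have := (finite_edgeNeighbors hs (v := v)).to_subtype
  have hb : ∀ u, v + b u ∈ convexHull ℝ s := fun u => (hbv u).symm ▸ u.2.2.1.subset rfl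
  refine (congrArg (fun F => finrank ℝ (vectorSpan ℝ F)) (hF.eq_cornerFace hvF hcone hb)).trans ?_
  rw [finrank_vectorSpan_cornerFace (hv.subset rfl) hb, inter_comm, ← Subtype.image_preimage_coe,
    ncard_image_of_injective _ Subtype.val_injective]
  simp only [hbv]
  rfl

theorem IsExposed.eq_of_inter_edgeNeighbors_eq {F F' : Set E}
    (hF : IsExposed ℝ (convexHull ℝ s) F) (hF' : IsExposed ℝ (convexHull ℝ s) F')
    (hvF : v ∈ F) (hvF' : v ∈ F') (hs : s.Finite) (hv : IsExposed ℝ (convexHull ℝ s) {v})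
    (hdim : finrank ℝ (vectorSpan ℝ (convexHull ℝ s)) = finrank ℝ E)
    (hdeg : (edgeNeighbors (convexHull ℝ s) v).ncard = finrank ℝ E)
    (h : F ∩ edgeNeighbors (convexHull ℝ s) v = F' ∩ edgeNeighbors (convexHull ℝ s) v) :
    F = F' := by
  obtain ⟨b, hbv, hcone⟩ := exists_basis_edgeNeighbors hs hv hdim hdeg
  have := (finite_edgeNeighbors hs (v := v)).to_subtype
  have hb : ∀ u, v + b u ∈ convexHull ℝ s := fun u => (hbv u).symm ▸ u.2.2.1.subset rfl
  rw [hF.eq_cornerFace hvF hcone hb, hF'.eq_cornerFace hvF' hcone hb]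
  congr 1
  ext u
  simp only [mem_ofPred_eq, hbv]
  simpa [u.2] using congrArg ((u : E) ∈ ·) h

end SimpleVertex

end Polytope

section SimplePolytope

variable {d : ℕ} {P : Set (EuclideanSpace ℝ (Fin d))}

theorem polyGraph_adj_iff {v w : Vtx P} :
    (polyGraph P).Adj v w ↔ (w : EuclideanSpace ℝ (Fin d)) ∈ edgeNeighbors P v :=
  ⟨fun ⟨hne, hseg⟩ => ⟨fun h => hne (Subtype.ext h.symm), w.2, hseg⟩,
    fun ⟨hne, _, hseg⟩ => ⟨fun h => hne (congrArg Subtype.val h).symm, hseg⟩⟩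

theorem image_val_neighborSet (v : Vtx P) :
    Subtype.val '' (polyGraph P).neighborSet v = edgeNeighbors P v :=
  Set.ext fun x => ⟨fun ⟨_, hw, hwx⟩ => hwx ▸ polyGraph_adj_iff.1 hw,
    fun hx => ⟨⟨x, hx.2.1⟩, polyGraph_adj_iff.2 hx, rfl⟩⟩

theorem image_val_faceVerts_inter_neighborSet (v : Vtx P) (F : Set (EuclideanSpace ℝ (Fin d))) :
    Subtype.val '' (faceVerts P F ∩ (polyGraph P).neighborSet v) = F ∩ edgeNeighbors P v :=
  Set.ext fun x => ⟨fun ⟨_, ⟨hwF, hw⟩, hwx⟩ => hwx ▸ ⟨hwF, polyGraph_adj_iff.1 hw⟩,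
    fun ⟨hxF, hx⟩ => ⟨⟨x, hx.2.1⟩, ⟨hxF, polyGraph_adj_iff.2 hx⟩, rfl⟩⟩

theorem IsSimplePolytope.exists_eq_convexHull (hP : IsSimplePolytope P) :
    ∃ s : Set (EuclideanSpace ℝ (Fin d)), s.Finite ∧ P = convexHull ℝ s ∧
      finrank ℝ (vectorSpan ℝ P) = finrank ℝ (EuclideanSpace ℝ (Fin d)) ∧
      ∀ v : Vtx P, (edgeNeighbors P v).ncard = finrank ℝ (EuclideanSpace ℝ (Fin d)) := by
  obtain ⟨⟨s, rfl⟩, hdim, hdeg⟩ := hP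
  refine ⟨s, s.finite_toSet, rfl, ?_, fun v => ?_⟩
  · rw [finrank_euclideanSpace_fin]
    exact hdim
  · rw [← image_val_neighborSet, ncard_image_of_injective _ Subtype.val_injective, hdeg,
      finrank_euclideanSpace_fin]

theorem IsSimplePolytope.inducedKRegular_faceVerts (hP : IsSimplePolytope P) {k : ℕ}
    {F : Set (EuclideanSpace ℝ (Fin d))} (hF : IsKFace P k F) :
    InducedKRegular (polyGraph P) k (faceVerts P F) := by
  obtain ⟨s, hs, rfl, hdim, hsimple⟩ := hP.exists_eq_convexHull
  intro v hv
  rw [← ncard_image_of_injective _ Subtype.val_injective, image_val_faceVerts_inter_neighborSet,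
    ← hF.2]
  exact (hF.1.finrank_vectorSpan_eq_ncard_inter_edgeNeighbors hv hs v.2 hdim (hsimple v)).symm

theorem IsSimplePolytope.existsUnique_mem_kFaceSets_insert_subset (hP : IsSimplePolytope P)
    {k : ℕ} (r : Vtx P) (N : Finset (Vtx P)) (hN : N.card = k)
    (hadj : ∀ w ∈ N, (polyGraph P).Adj r w) :
    ∃! S, S ∈ kFaceSets P k ∧ insert r (N : Set (Vtx P)) ⊆ S := by
  obtain ⟨s, hs, rfl, hdim, hsimple⟩ := hP.exists_eq_convexHull
  set T : Set (EuclideanSpace ℝ (Fin d)) := Subtype.val '' (N : Set (Vtx (convexHull ℝ s)))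
  have hT : T ⊆ edgeNeighbors (convexHull ℝ s) r := by
    rintro _ ⟨w, hw, rfl⟩
    exact polyGraph_adj_iff.1 (hadj w hw)
  have hTk : T.ncard = k := by
    rw [ncard_image_of_injective _ Subtype.val_injective, ncard_coe_finset, hN]
  obtain ⟨F, hF, hrF, hFT, hFk⟩ :=
    exists_isExposed_inter_edgeNeighbors_eq hs r.2 hdim (hsimple r) hT
  refine ⟨faceVerts _ F, ⟨⟨F, ⟨hF, hFk.trans hTk⟩, rfl⟩, ?_⟩, ?_⟩
  · rintro w (rfl | hw)
    · exact hrF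
    · exact (hFT.ge (mem_image_of_mem Subtype.val hw)).1
  rintro _ ⟨⟨F', ⟨hF', hF'k⟩, rfl⟩, hsub⟩
  have hrF' : (r : EuclideanSpace ℝ (Fin d)) ∈ F' := hsub (mem_insert r _)
  have hTF' : T ⊆ F' ∩ edgeNeighbors (convexHull ℝ s) r := by
    rintro _ ⟨w, hw, rfl⟩
    exact ⟨hsub (mem_insert_of_mem r hw), hT ⟨w, hw, rfl⟩⟩
  have hF'T := eq_of_subset_of_ncard_le hTF' (by
    rw [← hF'.finrank_vectorSpan_eq_ncard_inter_edgeNeighbors hrF' hs r.2 hdim (hsimple r)]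
    exact (hF'k.trans hTk.symm).le) ((finite_edgeNeighbors hs).inter_of_right _)
  rw [hF'.eq_of_inter_edgeNeighbors_eq hF hrF' hrF hs r.2 hdim (hsimple r)
    (hF'T.symm.trans hFT.symm)]

end SimplePolytope

theorem stmt_2_general {d : ℕ} (P : Set (EuclideanSpace ℝ (Fin d))) (hP : IsSimplePolytope P)
    (k : ℕ) :
    IsKSystem (polyGraph P) k (kFaceSets P k) := by
  refine ⟨?_, fun r N hN hadj => hP.existsUnique_mem_kFaceSets_insert_subset r N hN hadj⟩
  rintro _ ⟨F, hF, rfl⟩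
  exact hP.inducedKRegular_faceVerts hF

/-- The set of vertex sets of `k`-faces of a simple `d`-polytope is a
`k`-system of its graph. -/
theorem stmt_2 {d : ℕ} (P : Set (EuclideanSpace ℝ (Fin d))) (hP : IsSimplePolytope P)
    (k : ℕ) (hk : 2 ≤ k) (hkd : k ≤ d - 1) :
    IsKSystem (polyGraph P) k (kFaceSets P k) :=
  stmt_2_general P hP k
end
end

section
/- Let P be a simple d-polytope and let O be an acyclic orientation of G(P). Then H(O) := Σ_{i=0}^d h_i(O)·2^i is at least the total number of nonempty faces of P, and equality holds if and only if O is an AOF-orientation of G(P). -/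
open Set

noncomputable section

/-!
Double count the pairs `(F, v)` where `v` is a sink of the nonempty face `F`.

At a vertex `v` of a simple `d`-polytope the `d` edge directions form a basis, and the
coordinates of `x - v` in this basis are nonnegative for `x ∈ P`: by the vertex-figure argument,
a linear functional that does not increase along any edge at `v` is maximized at `v`. Hence the
faces through `v` are exactly the sets cut out of `P` by the vanishing of a subset of these
coordinates, one face for each set of neighbours of `v`, and `v` is a sink of that face iff the
neighbours are in-neighbours. So `v` is a sink of exactly `2 ^ indeg v` faces, and the number of
pairs is `H(O)`. Counted face by face it is `∑_F #sinks(F)`, and every nonempty face has a sink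
because `O` is acyclic: this gives the inequality, with equality iff every face has exactly one.
-/

section Polytope

variable {E : Type*} [NormedAddCommGroup E] [NormedSpace ℝ E]

theorem ContinuousLinearMap.le_of_mem_convexHull (l : E →L[ℝ] ℝ) {t : Set E} {c : ℝ}
    (hc : ∀ y ∈ t, l y ≤ c) {x : E} (hx : x ∈ convexHull ℝ t) : l x ≤ c := by
  obtain ⟨y, hy, hxy⟩ :=
    ((l : E →ₗ[ℝ] ℝ).convexOn convex_univ).exists_ge_of_mem_convexHull (subset_univ _) hx
  exact hxy.trans (hc y hy)

theorem ContinuousLinearMap.mem_toExposed_iff_eq (l : E →L[ℝ] ℝ) {A : Set E} {v x : E}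
    (hv : v ∈ A) (hmax : ∀ y ∈ A, l y ≤ l v) : x ∈ l.toExposed A ↔ x ∈ A ∧ l x = l v :=
  ⟨fun hx => ⟨hx.1, (hmax x hx.1).antisymm (hx.2 v hv)⟩,
    fun hx => ⟨hx.1, fun y hy => hx.2 ▸ hmax y hy⟩⟩

theorem IsCompact.convexHull_extremePoints {K : Set E} (hK : IsCompact K) (hconv : Convex ℝ K)
    (hfin : (K.extremePoints ℝ).Finite) : convexHull ℝ (K.extremePoints ℝ) = K := by
  rw [← (hfin.isClosed_convexHull ℝ).closure_eq]
  exact closure_convexHull_extremePoints hK hconv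

theorem convexHull_extremePoints_convexHull_s18 (s : Finset E) :
    convexHull ℝ ((convexHull ℝ (↑s : Set E)).extremePoints ℝ) = convexHull ℝ ↑s :=
  (s.finite_toSet.isCompact_convexHull ℝ).convexHull_extremePoints (convex_convexHull ℝ _)
    (s.finite_toSet.subset extremePoints_convexHull_subset)

theorem IsExposed.exists_apply_lt_apply {A : Set E} {x : E} (h : IsExposed ℝ A {x}) :
    ∃ l : E →L[ℝ] ℝ, ∀ y ∈ A, y ≠ x → l y < l x := by
  obtain ⟨l, hl⟩ := h (singleton_nonempty x)
  have hx : x ∈ l.toExposed A := by rw [ContinuousLinearMap.toExposed, ← hl]; rfl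
  refine ⟨l, fun y hy hyx => (hx.2 y hy).lt_of_ne fun hxy => hyx ?_⟩
  have hy' : y ∈ l.toExposed A := (l.mem_toExposed_iff_eq hx.1 hx.2).2 ⟨hy, hxy⟩
  rwa [ContinuousLinearMap.toExposed, ← hl] at hy'

theorem IsExposed.eq_convexHull_inter {s : Finset E} {F : Set E}
    (hF : IsExposed ℝ (convexHull ℝ ↑s) F) : F = convexHull ℝ (↑s ∩ F) := by
  have hconv : Convex ℝ F := hF.convex (convex_convexHull ℝ _)
  have hext : F.extremePoints ℝ ⊆ ↑s ∩ F := fun x hx =>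
    ⟨extremePoints_convexHull_subset (hF.isExtreme.extremePoints_subset_extremePoints hx), hx.1⟩
  refine Subset.antisymm ?_ (convexHull_min inter_subset_right hconv)
  calc F = convexHull ℝ (F.extremePoints ℝ) :=
        ((hF.isCompact (s.finite_toSet.isCompact_convexHull ℝ)).convexHull_extremePoints hconv
          ((s.finite_toSet.inter_of_left F).subset hext)).symm
    _ ⊆ convexHull ℝ (↑s ∩ F) := convexHull_mono hext

theorem isExposed_singleton_of_mem_extremePoints_s18 {s : Finset E} {x : E}
    (hx : x ∈ (convexHull ℝ (↑s : Set E)).extremePoints ℝ) :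
    IsExposed ℝ (convexHull ℝ ↑s) {x} := by
  classical
  have hxs : x ∈ s := extremePoints_convexHull_subset hx
  have hsub : convexHull ℝ ↑(s.erase x) ⊆ convexHull ℝ (↑s : Set E) :=
    convexHull_mono (Finset.coe_subset.2 (s.erase_subset x))
  have hnot : x ∉ convexHull ℝ ↑(s.erase x) := fun hmem => by
    simpa using extremePoints_convexHull_subset
      (inter_extremePoints_subset_extremePoints_of_subset hsub ⟨hmem, hx⟩)
  obtain ⟨f, u, hfu, hux⟩ := geometric_hahn_banach_closed_point (convex_convexHull ℝ _)
    ((s.erase x).finite_toSet.isClosed_convexHull ℝ) hnot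
  -- `f` is maximized over the generators exactly at `x`, so its face is `conv {x} = {x}`
  have hlt : ∀ y ∈ s, y ≠ x → f y < f x := fun y hy hyx =>
    (hfu y (subset_convexHull ℝ _ (Finset.mem_erase.2 ⟨hyx, hy⟩))).trans hux
  have hmax : ∀ y ∈ convexHull ℝ (↑s : Set E), f y ≤ f x :=
    fun y => f.le_of_mem_convexHull fun z hz =>
      (eq_or_ne z x).elim (fun h => h ▸ le_rfl) fun h => (hlt z hz h).le
  have hgen : (↑s : Set E) ∩ f.toExposed (convexHull ℝ ↑s) = {x} := by
    ext y
    simp only [mem_inter_iff, f.mem_toExposed_iff_eq (subset_convexHull ℝ _ hxs) hmax,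
      mem_singleton_iff, Finset.mem_coe]
    constructor
    · rintro ⟨hy, -, hfy⟩
      by_contra hyx
      exact (hlt y hy hyx).ne hfy
    · rintro rfl
      exact ⟨hxs, subset_convexHull ℝ _ hxs, rfl⟩
  have hexp := ContinuousLinearMap.toExposed.isExposed (l := f) (A := convexHull ℝ (↑s : Set E))
  rwa [hexp.eq_convexHull_inter, hgen, convexHull_singleton] at hexp

/-- The central projection from `v` onto the hyperplane `l₀ = l₀ v - 1`; applied to the other
generators of a polytope with vertex `v` exposed by `l₀`, it spans a vertex figure at `v`. -/
def radialProj (l₀ : E →L[ℝ] ℝ) (v y : E) : E := v + (l₀ v - l₀ y)⁻¹ • (y - v)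

theorem apply_radialProj_sub (f l₀ : E →L[ℝ] ℝ) (v y : E) :
    f (radialProj l₀ v y) - f v = (l₀ v - l₀ y)⁻¹ * (f y - f v) := by
  simp [radialProj]

theorem mem_segment_of_radialProj_eq {l₀ : E →L[ℝ] ℝ} {v y w : E} (hy : l₀ y < l₀ v)
    (hwy : l₀ w ≤ l₀ y) (h : radialProj l₀ v y = radialProj l₀ v w) : y ∈ segment ℝ v w := by
  have ha : 0 < l₀ v - l₀ y := sub_pos.2 hy
  have hab : l₀ v - l₀ y ≤ l₀ v - l₀ w := by linarith
  have hb : 0 < l₀ v - l₀ w := ha.trans_le hab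
  have hyv : y - v = ((l₀ v - l₀ y) / (l₀ v - l₀ w)) • (w - v) := by
    have h' := congrArg (fun z => (l₀ v - l₀ y) • (z - v)) h
    simp only [radialProj, add_sub_cancel_left, smul_smul, mul_inv_cancel₀ ha.ne', one_smul] at h'
    rw [h', div_eq_mul_inv]
  rw [segment_eq_image']
  refine ⟨_, ⟨div_nonneg ha.le hb.le, (div_le_one hb).2 hab⟩, ?_⟩
  show v + _ • (w - v) = y
  rw [← hyv, add_sub_cancel]

theorem ContinuousLinearMap.toExposed_convexHull_eq_segment (h : E →L[ℝ] ℝ) {s : Finset E}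
    {v w : E} (hv : v ∈ s) (hw : w ∈ s) (hmax : ∀ y ∈ s, h y ≤ h v) (hwv : h w = h v)
    (hseg : ∀ y ∈ s, h y = h v → y ∈ segment ℝ v w) :
    h.toExposed (convexHull ℝ ↑s) = segment ℝ v w := by
  have hF : IsExposed ℝ (convexHull ℝ ↑s) (h.toExposed (convexHull ℝ ↑s)) :=
    ContinuousLinearMap.toExposed.isExposed
  have hmem : ∀ x, x ∈ h.toExposed (convexHull ℝ ↑s) ↔ x ∈ convexHull ℝ ↑s ∧ h x = h v :=
    fun x => h.mem_toExposed_iff_eq (subset_convexHull ℝ _ hv) fun _ => h.le_of_mem_convexHull hmax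
  refine Subset.antisymm ?_ ?_
  · rw [hF.eq_convexHull_inter]
    exact convexHull_min (fun y ⟨hy, hyF⟩ => hseg y hy ((hmem y).1 hyF).2) (convex_segment v w)
  · rw [← convexHull_pair]
    refine convexHull_min ?_ (hF.convex (convex_convexHull ℝ _))
    rw [insert_subset_iff, singleton_subset_iff]
    exact ⟨(hmem v).2 ⟨subset_convexHull ℝ _ hv, rfl⟩, (hmem w).2 ⟨subset_convexHull ℝ _ hw, hwv⟩⟩

theorem exists_apply_le_apply_and_eq_iff_radialProj_eq [DecidableEq E] {s : Finset E} {v : E}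
    {l₀ : E →L[ℝ] ℝ} (hl₀ : ∀ y ∈ s, y ≠ v → l₀ y < l₀ v) {q : E}
    (hq : q ∈ (convexHull ℝ ↑((s.erase v).image (radialProj l₀ v))).extremePoints ℝ) :
    ∃ h : E →L[ℝ] ℝ, ∀ y ∈ s, y ≠ v → h y ≤ h v ∧ (h y = h v ↔ radialProj l₀ v y = q) := by
  obtain ⟨g, hg⟩ := (isExposed_singleton_of_mem_extremePoints_s18 hq).exists_apply_lt_apply
  -- `g` exposes `q` in the vertex figure; the tilt by `l₀` puts `v` and `q` on one level set
  refine ⟨g + (g q - g v) • l₀, fun y hy hyv => ?_⟩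
  set p := radialProj l₀ v
  have ha := sub_pos.2 (hl₀ y hy hyv)
  have hdiff : (g + (g q - g v) • l₀) y - (g + (g q - g v) • l₀) v =
      (l₀ v - l₀ y) * (g (p y) - g q) := by
    rw [show g (p y) = g v + (l₀ v - l₀ y)⁻¹ * (g y - g v) by
      linarith [apply_radialProj_sub g l₀ v y]]
    simp only [add_apply, smul_apply, smul_eq_mul]
    field_simp
    ring
  have hpR : p y ∈ convexHull ℝ ↑((s.erase v).image p) :=
    subset_convexHull ℝ _ (Finset.mem_image_of_mem _ (Finset.mem_erase.2 ⟨hyv, hy⟩))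
  rcases eq_or_ne (p y) q with hpy | hpy
  · have heq := sub_eq_zero.1 (by rw [hdiff, hpy, sub_self, mul_zero])
    exact ⟨heq.le, iff_of_true heq hpy⟩
  · have hlt := mul_neg_of_pos_of_neg ha (sub_neg.2 (hg _ hpR hpy))
    rw [← hdiff, sub_neg] at hlt
    exact ⟨hlt.le, iff_of_false hlt.ne hpy⟩

theorem exists_isExposed_segment_radialProj_eq [DecidableEq E] {s : Finset E} {v : E}
    {l₀ : E →L[ℝ] ℝ} (hv : v ∈ s) (hl₀ : ∀ y ∈ s, y ≠ v → l₀ y < l₀ v) {q : E}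
    (hq : q ∈ (convexHull ℝ ↑((s.erase v).image (radialProj l₀ v))).extremePoints ℝ) :
    ∃ w ∈ s, w ≠ v ∧ radialProj l₀ v w = q ∧
      IsExposed ℝ (convexHull ℝ ↑s) (segment ℝ v w) := by
  obtain ⟨h, hh⟩ := exists_apply_le_apply_and_eq_iff_radialProj_eq hl₀ hq
  obtain ⟨y₀, hy₀, hpy₀⟩ := Finset.mem_image.1 (extremePoints_convexHull_subset hq)
  -- the generator farthest from `v` on the ray through `q`
  obtain ⟨w, hw, hwmin⟩ := ((s.erase v).filter (radialProj l₀ v · = q)).exists_min_image l₀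
    ⟨y₀, Finset.mem_filter.2 ⟨hy₀, hpy₀⟩⟩
  obtain ⟨hw, hpw⟩ := Finset.mem_filter.1 hw
  obtain ⟨hwv, hws⟩ := Finset.mem_erase.1 hw
  refine ⟨w, hws, hwv, hpw, ?_⟩
  rw [← h.toExposed_convexHull_eq_segment hv hws
    (fun y hy => (eq_or_ne y v).elim (fun e => e ▸ le_rfl) fun hyv => (hh y hy hyv).1)
    ((hh w hws hwv).2.2 hpw) fun y hy hyh => ?_]
  · exact ContinuousLinearMap.toExposed.isExposed
  rcases eq_or_ne y v with rfl | hyv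
  · exact left_mem_segment ℝ y w
  have hpy := (hh y hy hyv).2.1 hyh
  exact mem_segment_of_radialProj_eq (hl₀ y hy hyv)
    (hwmin y (Finset.mem_filter.2 ⟨Finset.mem_erase.2 ⟨hyv, hy⟩, hpy⟩)) (hpy.trans hpw.symm)

theorem le_of_forall_edge_le {s : Finset E} {v : E} (hv : IsExposed ℝ (convexHull ℝ ↑s) {v})
    (l : E →L[ℝ] ℝ)
    (hl : ∀ w ∈ s, w ≠ v → IsExposed ℝ (convexHull ℝ ↑s) (segment ℝ v w) → l w ≤ l v) :
    ∀ x ∈ convexHull ℝ ↑s, l x ≤ l v := by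
  classical
  obtain ⟨l₀, hl₀⟩ := hv.exists_apply_lt_apply
  have hl₀s : ∀ y ∈ s, y ≠ v → l₀ y < l₀ v := fun y hy => hl₀ y (subset_convexHull ℝ _ hy)
  have hvs : v ∈ s := extremePoints_convexHull_subset (isExtreme_singleton.1 hv.isExtreme)
  set t := (s.erase v).image (radialProj l₀ v)
  -- `l` decreases from `v` along every edge, hence on every vertex of the vertex figure
  have hfig : ∀ z ∈ convexHull ℝ (↑t : Set E), l z ≤ l v := by
    rw [← convexHull_extremePoints_convexHull_s18]
    refine fun z => l.le_of_mem_convexHull fun q hq => ?_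
    obtain ⟨w, hws, hwv, rfl, hseg⟩ := exists_isExposed_segment_radialProj_eq hvs hl₀s hq
    have := mul_nonpos_of_nonneg_of_nonpos (inv_pos.2 (sub_pos.2 (hl₀s w hws hwv))).le
      (sub_nonpos.2 (hl w hws hwv hseg))
    linarith [apply_radialProj_sub l l₀ v w]
  refine fun x => l.le_of_mem_convexHull fun y hy => ?_
  rcases eq_or_ne y v with rfl | hyv
  · rfl
  have hpy := hfig _ (subset_convexHull ℝ _ (Finset.mem_coe.2
    (Finset.mem_image_of_mem _ (Finset.mem_erase.2 ⟨hyv, hy⟩))))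
  have e := apply_radialProj_sub l l₀ v y
  have ha := inv_pos.2 (sub_pos.2 (hl₀s y hy hyv))
  nlinarith

end Polytope

section PolytopeGraph

variable {d : ℕ} {P : Set (EuclideanSpace ℝ (Fin d))}

theorem IsPolytope.finite_vtx (hP : IsPolytope P) : Finite (Vtx P) := by
  obtain ⟨s, rfl⟩ := hP
  have hs : ∀ v : Vtx (convexHull ℝ (↑s : Set (EuclideanSpace ℝ (Fin d)))),
      (v : EuclideanSpace ℝ (Fin d)) ∈ s :=
    fun v => extremePoints_convexHull_subset (isExtreme_singleton.1 (IsExposed.isExtreme v.2))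
  exact Finite.of_injective (fun v => (⟨v, hs v⟩ : {x // x ∈ s})) fun u w h =>
    Subtype.ext (by simpa using h)

theorem IsPolytope.finite_setOf_isFace (hP : IsPolytope P) : {F | IsFace P F}.Finite := by
  obtain ⟨s, rfl⟩ := hP
  exact (s.finite_toSet.finite_subsets.image (convexHull ℝ)).subset fun F hF =>
    ⟨_, inter_subset_left, (IsExposed.eq_convexHull_inter hF).symm⟩

theorem IsPolytope.faceVerts_nonempty (hP : IsPolytope P) {F : Set (EuclideanSpace ℝ (Fin d))}
    (hF : IsFace P F) (hne : F.Nonempty) : (faceVerts P F).Nonempty := by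
  obtain ⟨s, rfl⟩ := hP
  obtain ⟨x, hx⟩ :=
    (IsExposed.isCompact hF (s.finite_toSet.isCompact_convexHull ℝ)).extremePoints_nonempty hne
  exact ⟨⟨x, isExposed_singleton_of_mem_extremePoints_s18
    ((IsExposed.isExtreme hF).extremePoints_subset_extremePoints hx)⟩, hx.1⟩

theorem IsPolytope.le_of_forall_adj_le (hP : IsPolytope P) (v : Vtx P)
    (l : EuclideanSpace ℝ (Fin d) →L[ℝ] ℝ) (hl : ∀ u, (polyGraph P).Adj v u → l u ≤ l v) :
    ∀ x ∈ P, l x ≤ l v := by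
  obtain ⟨s₀, rfl⟩ := hP
  have hfin : ((convexHull ℝ (↑s₀ : Set (EuclideanSpace ℝ (Fin d)))).extremePoints ℝ).Finite :=
    s₀.finite_toSet.subset extremePoints_convexHull_subset
  have hs : convexHull ℝ ↑hfin.toFinset = convexHull ℝ (↑s₀ : Set (EuclideanSpace ℝ (Fin d))) := by
    rw [hfin.coe_toFinset, convexHull_extremePoints_convexHull_s18]
  intro x hx
  rw [← hs] at hx
  refine le_of_forall_edge_le (by rw [hs]; exact v.2) l
    (fun w hw hwv hseg => hl ⟨w, ?_⟩ ⟨?_, hs ▸ hseg⟩) x hx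
  · exact isExposed_singleton_of_mem_extremePoints_s18 (hfin.mem_toFinset.1 hw)
  · exact fun h => hwv (congrArg Subtype.val h).symm

end PolytopeGraph

section SimplePolytope

variable {d : ℕ} {P : Set (EuclideanSpace ℝ (Fin d))}

theorem vtx_mem (u : Vtx P) : (u : EuclideanSpace ℝ (Fin d)) ∈ P :=
  IsExposed.subset u.2 (mem_singleton _)

theorem IsPolytope.span_edge_eq_top (hP : IsPolytope P) (hdim : setDim P = d) (v : Vtx P) :
    Submodule.span ℝ (range fun u : (polyGraph P).neighborSet v =>
      (u : EuclideanSpace ℝ (Fin d)) - v) = ⊤ := by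
  by_contra hne
  obtain ⟨f, hf0, hker⟩ := Submodule.exists_le_ker_of_lt_top _ (lt_top_iff_ne_top.2 hne)
  set l := LinearMap.toContinuousLinearMap f
  have hedge : ∀ u, (polyGraph P).Adj v u → l u = l v := fun u hu => by
    have := hker (Submodule.subset_span ⟨⟨u, hu⟩, rfl⟩)
    rwa [LinearMap.mem_ker, map_sub, sub_eq_zero] at this
  have hconst : ∀ x ∈ P, l x = l v := fun x hx => by
    have h₁ := hP.le_of_forall_adj_le v l (fun u hu => (hedge u hu).le) x hx
    have h₂ := hP.le_of_forall_adj_le v (-l) (fun u hu => by simp [hedge u hu]) x hx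
    simp only [neg_apply, neg_le_neg_iff] at h₂
    exact h₁.antisymm h₂
  have htop : vectorSpan ℝ P = ⊤ :=
    Submodule.eq_top_of_finrank_eq (by rw [finrank_euclideanSpace_fin]; exact hdim)
  refine hf0 (LinearMap.ker_eq_top.1 (top_le_iff.1 (htop ▸ ?_)))
  rw [vectorSpan_def, Submodule.span_le]
  rintro _ ⟨a, ha, b, hb, rfl⟩
  change l (a - b) = 0
  rw [map_sub, hconst a ha, hconst b hb, sub_self]

def edgeBasis (hP : IsSimplePolytope P) (v : Vtx P) :
    Module.Basis ((polyGraph P).neighborSet v) ℝ (EuclideanSpace ℝ (Fin d)) :=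
  have := hP.1.finite_vtx
  have := Fintype.ofFinite ((polyGraph P).neighborSet v)
  have hspan := (hP.1.span_edge_eq_top hP.2.1 v).ge
  Module.Basis.mk (linearIndependent_of_top_le_span_of_card_eq_finrank hspan (by
    rw [finrank_euclideanSpace_fin, Fintype.card_eq_nat_card, Nat.card_coe_set_eq, hP.2.2 v])) hspan

theorem edgeBasis_apply (hP : IsSimplePolytope P) (v : Vtx P)
    (u : (polyGraph P).neighborSet v) :
    edgeBasis hP v u = (u : EuclideanSpace ℝ (Fin d)) - v := by
  simp only [edgeBasis, Module.Basis.mk_apply]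

theorem edgeBasis_repr_sub_nonneg (hP : IsSimplePolytope P) (v : Vtx P)
    {x : EuclideanSpace ℝ (Fin d)} (hx : x ∈ P) (u : (polyGraph P).neighborSet v) :
    0 ≤ (edgeBasis hP v).repr (x - v) u := by
  set c := LinearMap.toContinuousLinearMap ((edgeBasis hP v).coord u)
  have hc : ∀ y, c y = (edgeBasis hP v).repr y u := fun y => rfl
  have h := hP.1.le_of_forall_adj_le v (-c) (fun w hw => by
    have := (edgeBasis hP v).repr_self ⟨w, hw⟩
    rw [edgeBasis_apply] at this
    simp only [neg_apply, neg_le_neg_iff, hc]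
    rw [← sub_nonneg, ← Finsupp.sub_apply, ← map_sub, this, Finsupp.single_apply]
    split_ifs <;> norm_num) x hx
  simp only [neg_apply, neg_le_neg_iff, hc] at h
  rwa [map_sub, Finsupp.sub_apply, sub_nonneg]

theorem toExposed_eq_setOf_edgeBasis_repr (hP : IsSimplePolytope P) (v : Vtx P)
    (l : EuclideanSpace ℝ (Fin d) →L[ℝ] ℝ) (hl : ∀ u, (polyGraph P).Adj v u → l u ≤ l v) :
    l.toExposed P = {x ∈ P | ∀ u : (polyGraph P).neighborSet v,
      l u ≠ l v → (edgeBasis hP v).repr (x - v) u = 0} := by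
  have := hP.1.finite_vtx
  have := Fintype.ofFinite ((polyGraph P).neighborSet v)
  set b := edgeBasis hP v
  have hsum : ∀ x, l x - l v = ∑ u, b.repr (x - v) u * (l u - l v) := fun x => by
    conv_lhs => rw [← map_sub, ← b.sum_repr (x - v)]
    simp only [map_sum, map_smul, smul_eq_mul, b, edgeBasis_apply, map_sub]
  have hterm : ∀ x ∈ P, ∀ u, b.repr (x - v) u * (l u - l v) ≤ 0 := fun x hx u =>
    mul_nonpos_of_nonneg_of_nonpos (edgeBasis_repr_sub_nonneg hP v hx u) (sub_nonpos.2 (hl u u.2))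
  have hmax : ∀ y ∈ P, l y ≤ l v := fun y hy =>
    sub_nonpos.1 ((hsum y).trans_le (Finset.sum_nonpos fun u _ => hterm y hy u))
  ext x
  rw [l.mem_toExposed_iff_eq (vtx_mem v) hmax, mem_ofPred_eq]
  refine and_congr_right fun hx => ?_
  rw [← sub_eq_zero, hsum, Finset.sum_eq_zero_iff_of_nonpos fun u _ => hterm x hx u]
  simp only [Finset.mem_univ, true_implies, mul_eq_zero, sub_eq_zero]
  exact forall_congr' fun u => or_iff_not_imp_right

/-- The face of `P` at `v` spanned by the edges from `v` to the vertices in `S`. -/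
def faceAt (hP : IsSimplePolytope P) (v : Vtx P) (S : Set (Vtx P)) :
    Set (EuclideanSpace ℝ (Fin d)) :=
  {x ∈ P | ∀ u : (polyGraph P).neighborSet v, (u : Vtx P) ∉ S → (edgeBasis hP v).repr (x - v) u = 0}

theorem faceAt_congr (hP : IsSimplePolytope P) (v : Vtx P) {S T : Set (Vtx P)}
    (h : ∀ u, (polyGraph P).Adj v u → (u ∈ S ↔ u ∈ T)) : faceAt hP v S = faceAt hP v T := by
  ext x
  simp only [faceAt, mem_ofPred_eq]
  exact and_congr_right fun _ => forall_congr' fun u => by rw [h u u.2]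

theorem faceAt_faceVerts (hP : IsSimplePolytope P) {v : Vtx P} {F : Set (EuclideanSpace ℝ (Fin d))}
    (hF : IsFace P F) (hv : v ∈ faceVerts P F) : faceAt hP v (faceVerts P F) = F := by
  obtain ⟨l, hl⟩ := hF ⟨v, hv⟩
  have hF' : F = l.toExposed P := hl
  have hmax : ∀ y ∈ P, l y ≤ l v := (hF' ▸ hv : (v : EuclideanSpace ℝ (Fin d)) ∈ l.toExposed P).2
  rw [hF']
  conv_rhs => rw [toExposed_eq_setOf_edgeBasis_repr hP v l fun u _ => hmax u (vtx_mem u)]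
  ext x
  refine and_congr_right fun _ => forall_congr' fun u => ?_
  simp only [faceVerts, mem_ofPred_eq, l.mem_toExposed_iff_eq (vtx_mem v) hmax, vtx_mem, true_and]

theorem isFace_faceAt (hP : IsSimplePolytope P) (v : Vtx P) (S : Set (Vtx P)) :
    IsFace P (faceAt hP v S) := by
  classical
  set l := LinearMap.toContinuousLinearMap
    ((edgeBasis hP v).constr ℝ fun u => if (u : Vtx P) ∈ S then (0 : ℝ) else -1)
  have hl : ∀ u : (polyGraph P).neighborSet v, l u - l v = if (u : Vtx P) ∈ S then 0 else -1 :=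
    fun u => by
      rw [← map_sub, ← edgeBasis_apply]
      exact (edgeBasis hP v).constr_basis ℝ _ u
  have hface := toExposed_eq_setOf_edgeBasis_repr hP v l fun u hu => by
    have := hl ⟨u, hu⟩
    split_ifs at this <;> linarith
  have : faceAt hP v S = l.toExposed P := by
    rw [hface]
    ext x
    refine and_congr_right fun _ => forall_congr' fun u => ?_
    have hS : l u ≠ l v ↔ (u : Vtx P) ∉ S := by
      rw [ne_eq, ← sub_eq_zero, hl u]
      split_ifs <;> simp [*]
    rw [hS]
  exact this ▸ ContinuousLinearMap.toExposed.isExposed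

theorem mem_faceVerts_faceAt_self (hP : IsSimplePolytope P) (v : Vtx P) (S : Set (Vtx P)) :
    v ∈ faceVerts P (faceAt hP v S) :=
  ⟨vtx_mem v, fun u _ => by simp⟩

theorem mem_faceVerts_faceAt (hP : IsSimplePolytope P) {v u : Vtx P} (S : Set (Vtx P))
    (hu : (polyGraph P).Adj v u) : u ∈ faceVerts P (faceAt hP v S) ↔ u ∈ S := by
  have hrepr := (edgeBasis hP v).repr_self ⟨u, hu⟩
  rw [edgeBasis_apply] at hrepr
  simp only [faceVerts, faceAt, mem_ofPred_eq, vtx_mem, true_and, hrepr, Finsupp.single_apply]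
  refine ⟨fun h => by_contra fun huS => by simpa using h ⟨u, hu⟩ huS, fun huS w hwS => ?_⟩
  rw [if_neg (by rintro rfl; exact hwS huS)]

end SimplePolytope

section Orientation

variable {V : Type*} {G : SimpleGraph V} {O : V → V → Prop}

theorem IsOrientation.adj (hO : IsOrientation G O) {u v : V} (h : O u v) : G.Adj u v :=
  hO.1 u v h

theorem IsOrientation.not_swap (hO : IsOrientation G O) {u v : V} (h : O u v) : ¬ O v u :=
  (hO.2 u v (hO.adj h)).1 h

theorem IsOrientation.swap_of_not (hO : IsOrientation G O) {u v : V} (hadj : G.Adj u v)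
    (h : ¬ O u v) : O v u :=
  by_contra fun h' => h ((hO.2 u v hadj).2 h')

theorem IsOrientation.inDeg_le [Finite V] (hO : IsOrientation G O) (v : V) :
    inDeg O v ≤ (G.neighborSet v).ncard :=
  Set.ncard_le_ncard fun _ hu => (hO.adj hu).symm

theorem AcyclicOrientation.exists_isSinkOn [Finite V] (hac : AcyclicOrientation O) {W : Set V}
    (hW : W.Nonempty) : ∃ v, IsSinkOn O W v := by
  have : IsTrans V (flip (Relation.TransGen O)) := ⟨fun _ _ _ h₁ h₂ => h₂.trans h₁⟩
  have : Std.Irrefl (flip (Relation.TransGen O)) := ⟨hac⟩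
  obtain ⟨m, hm, hmin⟩ :=
    (Finite.wellFounded_of_trans_of_irrefl (flip (Relation.TransGen O))).has_min W hW
  exact ⟨m, hm, fun u hu h => hmin u hu (.single h)⟩

theorem sum_hNum_mul [Fintype V] {d : ℕ} (hd : ∀ v, inDeg O v ≤ d) (g : ℕ → ℕ) :
    ∑ i ∈ Finset.range (d + 1), hNum O i * g i = ∑ v, g (inDeg O v) := by
  have hNum_eq : ∀ i, hNum O i = (Finset.univ.filter fun v => inDeg O v = i).card := fun i => by
    rw [hNum, ← Set.ncard_coe_finset, Finset.coe_filter]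
    simp
  simp_rw [hNum_eq, ← smul_eq_mul, ← Finset.sum_const]
  exact Finset.sum_fiberwise_of_maps_to'
    (fun v _ => Finset.mem_range.2 (Nat.lt_succ_of_le (hd v))) g

end Orientation

theorem Finset.card_le_sum_of_one_le {ι : Type*} {s : Finset ι} {f : ι → ℕ}
    (h : ∀ i ∈ s, 1 ≤ f i) : s.card ≤ ∑ i ∈ s, f i := by
  simpa using Finset.card_nsmul_le_sum s f 1 h

theorem Finset.sum_eq_card_iff_of_one_le {ι : Type*} {s : Finset ι} {f : ι → ℕ}
    (h : ∀ i ∈ s, 1 ≤ f i) : ∑ i ∈ s, f i = s.card ↔ ∀ i ∈ s, f i = 1 := by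
  rw [Finset.card_eq_sum_ones, eq_comm, Finset.sum_eq_sum_iff_of_le h]
  exact forall₂_congr fun _ _ => eq_comm

theorem ncard_setOf_isSinkOn {d : ℕ} {P : Set (EuclideanSpace ℝ (Fin d))}
    (hP : IsSimplePolytope P) {O : Vtx P → Vtx P → Prop} (hor : IsOrientation (polyGraph P) O)
    (v : Vtx P) :
    {F | (IsFace P F ∧ F.Nonempty) ∧ IsSinkOn O (faceVerts P F) v}.ncard = 2 ^ inDeg O v := by
  have := hP.1.finite_vtx
  -- a face through `v` of which `v` is a sink is determined by its in-neighbours of `v`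
  have hin : ∀ F, IsSinkOn O (faceVerts P F) v → ∀ u, (polyGraph P).Adj v u →
      (u ∈ faceVerts P F ↔ u ∈ {u | O u v ∧ u ∈ faceVerts P F}) := fun F hF u hu =>
    ⟨fun h => ⟨hor.swap_of_not hu (hF.2 u h), h⟩, And.right⟩
  rw [inDeg, ← Set.ncard_powerset]
  refine Set.ncard_congr (fun F _ => {u | O u v ∧ u ∈ faceVerts P F}) (fun _ _ _ hu => hu.1) ?_ ?_
  · rintro F₁ F₂ ⟨⟨hF₁, -⟩, hs₁⟩ ⟨⟨hF₂, -⟩, hs₂⟩ heq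
    rw [← faceAt_faceVerts hP hF₁ hs₁.1, ← faceAt_faceVerts hP hF₂ hs₂.1]
    exact faceAt_congr hP v fun u hu => by rw [hin F₁ hs₁ u hu, heq, ← hin F₂ hs₂ u hu]
  · intro S hS
    refine ⟨faceAt hP v S, ⟨⟨isFace_faceAt hP v S, _, mem_faceVerts_faceAt_self hP v S⟩,
      mem_faceVerts_faceAt_self hP v S, fun u hu huv => ?_⟩, ?_⟩
    · exact hor.not_swap huv (hS (((mem_faceVerts_faceAt hP S (hor.adj huv)).1 hu)))
    · ext u
      exact ⟨fun h => (mem_faceVerts_faceAt hP S (hor.adj h.1).symm).1 h.2,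
        fun h => ⟨hS h, (mem_faceVerts_faceAt hP S (hor.adj (hS h)).symm).2 h⟩⟩

open Classical in
theorem sum_hNum_mul_two_pow_eq_sum_card_isSinkOn {d : ℕ} {P : Set (EuclideanSpace ℝ (Fin d))}
    [Fintype (Vtx P)] (hP : IsSimplePolytope P) {O : Vtx P → Vtx P → Prop}
    (hor : IsOrientation (polyGraph P) O)
    (hfin : {F : Set (EuclideanSpace ℝ (Fin d)) | IsFace P F ∧ F.Nonempty}.Finite) :
    ∑ i ∈ Finset.range (d + 1), hNum O i * 2 ^ i =
      ∑ F ∈ hfin.toFinset, (Finset.univ.filter fun v => IsSinkOn O (faceVerts P F) v).card := by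
  rw [sum_hNum_mul (fun v => (hor.inDeg_le v).trans_eq (hP.2.2 v))]
  refine .trans (Finset.sum_congr rfl fun v _ => ?_)
    (Finset.sum_card_bipartiteAbove_eq_sum_card_bipartiteBelow
      fun v F => IsSinkOn O (faceVerts P F) v)
  rw [← ncard_setOf_isSinkOn hP hor v, ← Set.ncard_coe_finset, Finset.bipartiteAbove,
    Finset.coe_filter]
  simp

/-- For every acyclic orientation `O` of the graph of a simple `d`-polytope,
`H(O) = Σ_{i=0}^d h_i(O)·2^i` is at least the number of nonempty faces of `P`, with
equality iff `O` is an AOF-orientation. -/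
theorem stmt_18 {d : ℕ} (P : Set (EuclideanSpace ℝ (Fin d))) [Fintype (Vtx P)]
    (hP : IsSimplePolytope P)
    (O : Vtx P → Vtx P → Prop) (hor : IsOrientation (polyGraph P) O)
    (hac : AcyclicOrientation O) :
    {F : Set (EuclideanSpace ℝ (Fin d)) | IsFace P F ∧ F.Nonempty}.ncard ≤
        ∑ i ∈ Finset.range (d + 1), hNum O i * 2 ^ i ∧
      (∑ i ∈ Finset.range (d + 1), hNum O i * 2 ^ i =
          {F : Set (EuclideanSpace ℝ (Fin d)) | IsFace P F ∧ F.Nonempty}.ncard ↔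
        IsAOF P O) := by
  classical
  have hfin : {F : Set (EuclideanSpace ℝ (Fin d)) | IsFace P F ∧ F.Nonempty}.Finite :=
    hP.1.finite_setOf_isFace.subset fun _ hF => hF.1
  set sinks := fun F => (Finset.univ.filter fun v => IsSinkOn O (faceVerts P F) v).card
  have hone : ∀ F ∈ hfin.toFinset, 1 ≤ sinks F := fun F hF => by
    obtain ⟨hF, hne⟩ := hfin.mem_toFinset.1 hF
    obtain ⟨v, hv⟩ := hac.exists_isSinkOn (hP.1.faceVerts_nonempty hF hne)
    exact Finset.card_pos.2 ⟨v, Finset.mem_filter.2 ⟨Finset.mem_univ _, hv⟩⟩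
  have haof : IsAOF P O ↔ ∀ F ∈ hfin.toFinset, sinks F = 1 := by
    simp only [IsAOF, hor, hac, true_and, hfin.mem_toFinset, Fintype.existsUnique_iff_card_one]
    exact ⟨fun h F hF => h F hF.1 hF.2, fun h F hF hne => h F ⟨hF, hne⟩⟩
  rw [Set.ncard_eq_toFinset_card _ hfin, sum_hNum_mul_two_pow_eq_sum_card_isSinkOn hP hor hfin,
    haof]
  exact ⟨Finset.card_le_sum_of_one_le hone, Finset.sum_eq_card_iff_of_one_le hone⟩
end
end
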